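/- arXiv:2604.10779 — 2 statements merged into one kernel-verified Lean document; each statement's English description precedes it below -/
import Mathlib

section
/- For all π ∈ S_n', the stack-sorting tableau T_π : {1,...,n} → D(α_π) is a bijection. -/
noncomputable section
theorem foldrMaxMem (x : ℕ) (xs : List ℕ) : (x :: xs).foldr max 0 ∈ x :: xs := by
  induction xs generalizing x with
  | nil => simp
  | cons y ys ih =>
    rcases max_choice x ((y :: ys).foldr max 0) with h | h
    · simp only [List.foldr_cons] at h ⊢
      rw [h]; exact List.mem_cons_self
    · simp only [List.foldr_cons] at h ⊢
      rw [h]; exact List.mem_cons_of_mem _ (ih y)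
theorem takeWhileLt (l : List ℕ) (m : ℕ) (hm : m ∈ l) :
    (l.takeWhile (fun y => y ≠ m)).length < l.length := by
  have hd : l.dropWhile (fun y => y ≠ m) ≠ [] := by
    intro h; rw [List.dropWhile_eq_nil_iff] at h; simpa using h m hm
  have h1 : (l.takeWhile (fun y => y ≠ m)).length
      + (l.dropWhile (fun y => y ≠ m)).length = l.length := by
    rw [← List.length_append, List.takeWhile_append_dropWhile]
  have h2 : 0 < (l.dropWhile (fun y => y ≠ m)).length := List.length_pos_iff.mpr hd
  omega
theorem dropWhileDropLt (l : List ℕ) (m : ℕ) (hl : l ≠ []) :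
    ((l.dropWhile (fun y => y ≠ m)).drop 1).length < l.length := by
  have h1 : (l.takeWhile (fun y => y ≠ m)).length
      + (l.dropWhile (fun y => y ≠ m)).length = l.length := by
    rw [← List.length_append, List.takeWhile_append_dropWhile]
  have h2 : 0 < l.length := List.length_pos_iff.mpr hl
  rw [List.length_drop]; omega

/-- West's stack-sorting map `s`: `s([]) = []`, `s(L m R) = s(L) s(R) m` for `m` the maximum. -/
def ss : List ℕ → List ℕ
  | [] => []
  | x :: xs =>
    ss ((x :: xs).takeWhile (fun y => y ≠ (x :: xs).foldr max 0)) ++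
    ss (((x :: xs).dropWhile (fun y => y ≠ (x :: xs).foldr max 0)).drop 1) ++
    [(x :: xs).foldr max 0]
termination_by l => l.length
decreasing_by
  · exact takeWhileLt _ _ (foldrMaxMem _ _)
  · exact dropWhileDropLt _ _ (by simp)

/-- `met π` : the least `k ≥ 0` with `s^k(π)` increasing. -/
def met (l : List ℕ) : ℕ := sInf {k | List.Pairwise (· < ·) (ss^[k] l)}

/-- Right-to-left maxima of a list, read from left to right.  For the prefix of `s^{i-1}(π)`
before `0` this is exactly the column sequence `C_{π,i}`. -/
def rtlMax : List ℕ → List ℕ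
  | [] => []
  | x :: xs => if ∀ y ∈ xs, y < x then x :: rtlMax xs else rtlMax xs

/-- The blocks `b_{π,i,j}`: the segments strictly between consecutive right-to-left maxima. -/
def blocksOf : List ℕ → List (List ℕ)
  | [] => []
  | x :: xs =>
    if ∀ y ∈ xs, y < x then [] :: blocksOf xs
    else
      match blocksOf xs with
      | [] => [[x]]
      | b :: bs => (x :: b) :: bs

/-- The part of `s^{i-1}(π)` strictly before the entry `0`. -/
def prefixAt (π : List ℕ) (i : ℕ) : List ℕ := (ss^[i-1] π).takeWhile (fun x => x ≠ 0)

/-- The column sequence `C_{π,i}`. -/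
def colSeqAt (π : List ℕ) (i : ℕ) : List ℕ := rtlMax (prefixAt π i)

/-- The block sequence `B_{π,i}`. -/
def blocksAt (π : List ℕ) (i : ℕ) : List (List ℕ) := blocksOf (prefixAt π i)

/-- `col_π(v)`: the unique `i` with `v ∈ C_{π,i}` (as the least such `i ≥ 1`). -/
def colOf (π : List ℕ) (v : ℕ) : ℕ := sInf {i | 1 ≤ i ∧ v ∈ colSeqAt π i}

/-- `colpos_π(v)`: the (1-indexed) position of `v` in `C_{π,col_π(v)}`. -/
def colposOf (π : List ℕ) (v : ℕ) : ℕ := (colSeqAt π (colOf π v)).idxOf v + 1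

/-- `leftof_π(v) = c_{π,col_π(v)-1,j}` for the unique `j` with `v = max(b_{π,col_π(v)-1,j})`. -/
def leftOf (π : List ℕ) (v : ℕ) : ℕ :=
  (colSeqAt π (colOf π v - 1)).getD
    (((blocksAt π (colOf π v - 1)).map (fun b => b.foldr max 0)).idxOf v) 0

/-- `row_π(v)`: follow `leftof` back to column 1 and take `colpos` there. -/
def rowOf (π : List ℕ) (v : ℕ) : ℕ := colposOf π ((leftOf π)^[colOf π v - 1] v)

/-- `upof_π(v) = c_{π,col_π(v),colpos_π(v)-1}`. -/
def upOf (π : List ℕ) (v : ℕ) : ℕ := (colSeqAt π (colOf π v)).getD (colposOf π v - 2) 0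

/-- The stack-sorting tableau `T_π(v) = (col_π(v), row_π(v))`. -/
def Tmap (π : List ℕ) (v : ℕ) : ℕ × ℕ := (colOf π v, rowOf π v)

/-- The composition `α_π = (|{v ∈ [n] : row_π(v) = j}|)_{j=1}^{|C_{π,1}|}` (here `n = |π| - 1`). -/
def alphaOf (π : List ℕ) : List ℕ :=
  (List.range' 1 (colSeqAt π 1).length).map
    (fun j => ((Finset.Icc 1 (π.length - 1)).filter (fun v => rowOf π v = j)).card)

/-- Membership in the composition diagram `D(α) = {(i,j) : 1 ≤ j ≤ ℓ(α), 1 ≤ i ≤ α_j}`. -/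
def inDiagram (α : List ℕ) (p : ℕ × ℕ) : Prop :=
  1 ≤ p.1 ∧ 1 ≤ p.2 ∧ p.2 ≤ α.length ∧ p.1 ≤ α.getD (p.2 - 1) 0

instance inDiagramDec (α : List ℕ) : DecidablePred (inDiagram α) := fun p => by
  unfold inDiagram; infer_instance

/-- `D(α)` as a finite set. -/
def diagramFinset (α : List ℕ) : Finset (ℕ × ℕ) :=
  (Finset.range (α.foldr max 0 + 1) ×ˢ Finset.range (α.length + 1)).filter
    (fun p => inDiagram α p)

/-- `colpos_α(i,j) = |{(i,j') ∈ D(α) : j' < j} ∪ {(i,0)}|`. -/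
def colposA (α : List ℕ) (p : ℕ × ℕ) : ℕ :=
  (((Finset.range p.2).filter (fun j' => inDiagram α (p.1, j'))) ∪ {0}).card

/-- `leftof_α(i,j) = (i-1,j)`. -/
def leftA (p : ℕ × ℕ) : ℕ × ℕ := (p.1 - 1, p.2)

/-- `upof_α(i,j) = (i, max({j' < j : (i,j') ∈ D(α)} ∪ {0}))`. -/
def upA (α : List ℕ) (p : ℕ × ℕ) : ℕ × ℕ :=
  (p.1, (((Finset.range p.2).filter (fun j' => inDiagram α (p.1, j'))) ∪ {0}).sup id)

/-- The hook length `h_α(i,j)`. -/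
def hook (α : List ℕ) (p : ℕ × ℕ) : ℕ :=
  if 1 < p.1 then
    ((diagramFinset α).filter (fun q =>
      q.1 ≤ p.1 - 1 ∧ (upA α (p.1 - 1, p.2)).2 < q.2 ∧ q.2 ≤ p.2)).card
  else 1

/-- The segment `B_{π,T}(i,j,k)` of `s^{k-1}(π)`, where `U = T⁻¹`. -/
def Bseg (π : List ℕ) (α : List ℕ) (U : ℕ × ℕ → ℕ) (i j k : ℕ) : List ℕ :=
  if (upA α (leftA (i, j))).2 > 0 then
    ((ss^[k-1] π).take ((ss^[k-1] π).idxOf (U (k, j)) + 1)).drop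
      ((ss^[k-1] π).idxOf (U (k, (upA α (leftA (i, j))).2)) + 1)
  else
    (ss^[k-1] π).take ((ss^[k-1] π).idxOf (U (k, j)) + 1)

/-- The inverse `T_π⁻¹` of the stack-sorting tableau. -/
def invTmap (π : List ℕ) : ℕ × ℕ → ℕ :=
  Function.invFunOn (Tmap π) (Set.Icc 1 (π.length - 1))

/-- A linear extension of `D(α)`, encoded as the list `[T(1), …, T(n)]`:
`T` is a bijection `{1,…,n} → D(α)` with `T(a) ≥_D T(b) → a ≥ b`. -/
def isLinExt (α : List ℕ) (ℓ : List (ℕ × ℕ)) : Prop :=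
  ℓ.Nodup ∧ (∀ p, p ∈ ℓ ↔ inDiagram α p) ∧
  ∀ a b, a < ℓ.length → b < ℓ.length →
    (ℓ.getD a (0, 0)).1 ≤ (ℓ.getD b (0, 0)).1 ∧ (ℓ.getD a (0, 0)).2 ≤ (ℓ.getD b (0, 0)).2 →
    b ≤ a
end

/-!
Write `s^k(π) = P_{k+1} 0 A` with `A` increasing. Applying `s` once more replaces every block `b`
of `P_{k+1}` by `s(b)`, which ends in `max b`, and moves the right-to-left maxima `C_{k+1}` behind
`0`. So `P_{k+2}` is the concatenation of the `s(b)`, and every entry of `C_{k+2}` is the maximum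
of a block of `P_{k+1}`. Hence every `v ∈ [n]` lies in exactly one column, and `leftof` maps
column `k+2` injectively into column `k+1`, preserving rows. Thus rows label each column
injectively, and the columns meeting row `j` form an initial segment `{1, …, α_j}`: the image of
`T_π` is exactly `D(α_π)`.
-/

theorem le_foldr_max {l : List ℕ} {x : ℕ} (h : x ∈ l) : x ≤ l.foldr max 0 := by
  induction l with
  | nil => simp at h
  | cons a t ih =>
    rcases List.mem_cons.mp h with rfl | h
    · exact le_max_left _ _
    · exact (ih h).trans (le_max_right _ _)

theorem foldr_max_le {l : List ℕ} {m : ℕ} (h : ∀ x ∈ l, x ≤ m) : l.foldr max 0 ≤ m := by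
  induction l with
  | nil => simp
  | cons a t ih => simp_all

theorem foldr_max_eq {l : List ℕ} {m : ℕ} (hm : m ∈ l) (h : ∀ x ∈ l, x ≤ m) :
    l.foldr max 0 = m :=
  (foldr_max_le h).antisymm (le_foldr_max hm)

theorem forall_lt_of_nodup_append_cons {P Q : List ℕ} {m : ℕ} (hnd : (P ++ m :: Q).Nodup)
    (hle : ∀ y ∈ P ++ m :: Q, y ≤ m) : ∀ y ∈ P ++ Q, y < m := by
  have hm : m ∉ P ++ Q := (List.nodup_cons.mp (List.nodup_middle.mp hnd)).1
  intro y hy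
  refine (hle y ?_).lt_of_ne (ne_of_mem_of_not_mem hy hm)
  rcases List.mem_append.mp hy with hy | hy <;> simp [hy]

theorem exists_eq_append_cons_of_mem {a : ℕ} {l : List ℕ} (h : a ∈ l) :
    ∃ T D, l = T ++ a :: D ∧ a ∉ T := by
  induction l with
  | nil => simp at h
  | cons x xs ih =>
    by_cases hx : x = a
    · exact ⟨[], xs, by simp [hx], by simp⟩
    · obtain ⟨T, D, rfl, hT⟩ := ih ((List.mem_cons.mp h).resolve_left (Ne.symm hx))
      exact ⟨x :: T, D, rfl, by simp [hT, Ne.symm hx]⟩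

theorem ss_nil : ss [] = [] := by rw [ss]

theorem ss_append_cons {T D : List ℕ} {m : ℕ} (hmT : m ∉ T)
    (hle : ∀ x ∈ T ++ m :: D, x ≤ m) :
    ss (T ++ m :: D) = ss T ++ ss D ++ [m] := by
  have hmax : (T ++ m :: D).foldr max 0 = m := foldr_max_eq (by simp) hle
  have hT : ∀ y ∈ T, decide (y ≠ m) = true := fun y hy => by
    simpa using ne_of_mem_of_not_mem hy hmT
  obtain ⟨x, xs, hx⟩ : ∃ x xs, T ++ m :: D = x :: xs := List.exists_cons_of_ne_nil (by simp)
  rw [hx] at hmax ⊢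
  rw [ss, hmax, ← hx, List.takeWhile_append_of_pos hT, List.dropWhile_append_of_pos hT]
  simp

theorem ss_perm (l : List ℕ) : (ss l).Perm l := by
  induction hN : l.length using Nat.strong_induction_on generalizing l with
  | _ N ih =>
  cases l with
  | nil => rw [ss_nil]
  | cons x xs =>
    obtain ⟨T, D, hsplit, hmT⟩ := exists_eq_append_cons_of_mem (foldrMaxMem x xs)
    have hle : ∀ y ∈ T ++ _ :: D, y ≤ (x :: xs).foldr max 0 := fun y hy =>
      le_foldr_max (hsplit ▸ hy)
    have hlen : T.length < N ∧ D.length < N := by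
      have := congrArg List.length hsplit; simp only [List.length_cons, List.length_append] at this
      simp only [List.length_cons] at hN
      omega
    rw [hsplit, ss_append_cons hmT hle]
    refine (((ih _ hlen.1 T rfl).append (ih _ hlen.2 D rfl)).append_right _).trans ?_
    rw [List.append_assoc]
    exact List.perm_append_comm.append_left T

theorem rtlMax_sublist (l : List ℕ) : (rtlMax l).Sublist l := by
  induction l with
  | nil => simp [rtlMax]
  | cons x xs ih =>
    rw [rtlMax]
    split_ifs
    exacts [ih.cons_cons x, ih.cons x]

theorem rtlMax_ne_nil {l : List ℕ} (hl : l ≠ []) : rtlMax l ≠ [] := by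
  induction l with
  | nil => exact absurd rfl hl
  | cons x xs ih =>
    rw [rtlMax]
    split_ifs with h
    · simp
    · exact ih (by rintro rfl; simp at h)

theorem mem_rtlMax_append {l₁ l₂ : List ℕ} {v : ℕ} :
    v ∈ rtlMax (l₁ ++ l₂) ↔ (v ∈ rtlMax l₁ ∧ ∀ y ∈ l₂, y < v) ∨ v ∈ rtlMax l₂ := by
  induction l₁ with
  | nil => simp [rtlMax]
  | cons x xs ih =>
    rw [List.cons_append, rtlMax, rtlMax]
    simp only [List.forall_mem_append]
    split_ifs <;> grind

theorem length_blocksOf (l : List ℕ) : (blocksOf l).length = (rtlMax l).length := by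
  induction l with
  | nil => simp [rtlMax, blocksOf]
  | cons x xs ih =>
    rw [rtlMax, blocksOf]
    split_ifs with h
    · simp [ih]
    · have hxs : blocksOf xs ≠ [] := by
        rw [← List.length_pos_iff, ih, List.length_pos_iff]
        exact rtlMax_ne_nil (by rintro rfl; simp at h)
      split
      · contradiction
      · simp_all

theorem blocksOf_append_cons_of_lt {T D : List ℕ} {m : ℕ} (hT : ∀ y ∈ T, y < m)
    (hD : ∀ y ∈ D, y < m) :
    blocksOf (T ++ m :: D) = T :: blocksOf D ∧ rtlMax (T ++ m :: D) = m :: rtlMax D := by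
  induction T with
  | nil => rw [List.nil_append, blocksOf, rtlMax, if_pos hD, if_pos hD]; exact ⟨rfl, rfl⟩
  | cons a T ih =>
    obtain ⟨ihb, ihr⟩ := ih fun y hy => hT y (List.mem_cons_of_mem _ hy)
    have hcond : ¬ ∀ y ∈ T ++ m :: D, y < a := fun hall =>
      (hall m (by simp)).not_gt (hT a List.mem_cons_self)
    rw [List.cons_append, blocksOf, rtlMax, if_neg hcond, if_neg hcond, ihb, ihr]
    exact ⟨rfl, rfl⟩

theorem perm_flatten_blocksOf_append_rtlMax (l : List ℕ) :
    l.Perm ((blocksOf l).flatten ++ rtlMax l) := by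
  induction l with
  | nil => simp [blocksOf, rtlMax]
  | cons x xs ih =>
    rw [blocksOf, rtlMax]
    split_ifs
    · simpa using ih.cons x |>.trans List.perm_middle.symm
    · have : (match blocksOf xs with
          | [] => [[x]]
          | b :: bs => (x :: b) :: bs).flatten = x :: (blocksOf xs).flatten := by
        split <;> simp_all
      rw [this]
      exact ih.cons x

theorem ss_append_zero_cons_of_max_mem_left {T B A : List ℕ} {m : ℕ}
    (hlt : ∀ y ∈ T ++ (B ++ 0 :: A), y < m)
    (ih : ∃ M, M.Pairwise (· < ·) ∧ M.Perm (A ++ rtlMax B) ∧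
      ss (B ++ 0 :: A) = ((blocksOf B).map ss).flatten ++ 0 :: M) :
    ∃ M, M.Pairwise (· < ·) ∧ M.Perm (A ++ rtlMax (T ++ m :: B)) ∧
      ss (T ++ m :: B ++ 0 :: A) = ((blocksOf (T ++ m :: B)).map ss).flatten ++ 0 :: M := by
  obtain ⟨M, hMs, hMp, hMeq⟩ := ih
  obtain ⟨hbl, hrtl⟩ := blocksOf_append_cons_of_lt (T := T) (m := m) (D := B)
    (fun y hy => hlt y (by simp [hy])) (fun y hy => hlt y (by simp [hy]))
  refine ⟨M ++ [m], List.pairwise_append.mpr ⟨hMs, by simp, fun y hy => ?_⟩, ?_, ?_⟩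
  · rcases List.mem_append.mp (hMp.subset hy) with hy | hy
    · simpa using hlt y (by simp [hy])
    · simpa using hlt y (by simp [(rtlMax_sublist B).subset hy])
  · rw [hrtl]
    refine (hMp.append_right [m]).trans ?_
    rw [List.append_assoc]
    exact List.perm_append_comm.append_left A
  · rw [List.append_assoc, List.cons_append,
      ss_append_cons (fun h => (hlt m (by simp [h])).false) fun y hy => ?_, hMeq, hbl]
    · simp
    rcases List.mem_append.mp hy with hy | hy
    · exact (hlt y (by simp [hy])).le
    rcases List.mem_cons.mp hy with rfl | hy
    exacts [le_rfl, (hlt y (by simp [hy])).le]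

theorem ss_append_zero_cons_of_max_mem_right {B A : List ℕ} {m : ℕ}
    (hlt : ∀ y ∈ B ++ 0 :: A, y < m)
    (ih : ∃ M, M.Pairwise (· < ·) ∧ M.Perm (A ++ rtlMax B) ∧
      ss (B ++ 0 :: A) = ((blocksOf B).map ss).flatten ++ 0 :: M) :
    ∃ M, M.Pairwise (· < ·) ∧ M.Perm (A ++ [m] ++ rtlMax B) ∧
      ss (B ++ 0 :: (A ++ [m])) = ((blocksOf B).map ss).flatten ++ 0 :: M := by
  obtain ⟨M, hMs, hMp, hMeq⟩ := ih
  refine ⟨M ++ [m], List.pairwise_append.mpr ⟨hMs, by simp, fun y hy => ?_⟩, ?_, ?_⟩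
  · rcases List.mem_append.mp (hMp.subset hy) with hy | hy
    · simpa using hlt y (by simp [hy])
    · simpa using hlt y (by simp [(rtlMax_sublist B).subset hy])
  · refine (hMp.append_right [m]).trans ?_
    rw [List.append_assoc, List.append_assoc]
    exact List.perm_append_comm.append_left A
  · have hL : B ++ 0 :: (A ++ [m]) = (B ++ 0 :: A) ++ m :: [] := by simp
    rw [hL, ss_append_cons (fun h => (hlt m h).false) fun y hy => ?_, hMeq, ss_nil]
    · simp
    rcases List.mem_append.mp hy with hy | hy
    exacts [(hlt y hy).le, by simp_all]

theorem ss_append_zero_cons {B A : List ℕ} (hnd : (B ++ 0 :: A).Nodup)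
    (hA : A.Pairwise (· < ·)) :
    ∃ M, M.Pairwise (· < ·) ∧ M.Perm (A ++ rtlMax B) ∧
      ss (B ++ 0 :: A) = ((blocksOf B).map ss).flatten ++ 0 :: M := by
  induction hN : (B ++ A).length using Nat.strong_induction_on generalizing B A with
  | _ N ih =>
  by_cases hBA : B ++ A = []
  · obtain ⟨rfl, rfl⟩ := List.append_eq_nil_iff.mp hBA
    refine ⟨[], by simp, by simp [rtlMax], ?_⟩
    rw [ss_append_cons (by simp) (by simp), ss_nil, blocksOf]
    rfl
  obtain ⟨x, xs, hx⟩ := List.exists_cons_of_ne_nil hBA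
  obtain ⟨m, hmem, hmax⟩ : ∃ m ∈ B ++ A, ∀ y ∈ B ++ A, y ≤ m :=
    ⟨(B ++ A).foldr max 0, by rw [hx]; exact foldrMaxMem x xs, fun _ => le_foldr_max⟩
  have hle : ∀ y ∈ B ++ 0 :: A, y ≤ m := fun y hy => by
    rcases List.mem_append.mp hy with hy | hy
    · exact hmax y (List.mem_append_left _ hy)
    rcases List.mem_cons.mp hy with rfl | hy
    · exact Nat.zero_le _
    · exact hmax y (List.mem_append_right _ hy)
  rcases List.mem_append.mp hmem with hmB | hmA
  · obtain ⟨T, B, rfl⟩ := List.append_of_mem hmB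
    rw [List.append_assoc, List.cons_append] at hnd hle
    refine ss_append_zero_cons_of_max_mem_left (forall_lt_of_nodup_append_cons hnd hle) ?_
    refine ih (B ++ A).length (by rw [← hN]; simp; omega) (hnd.sublist ?_) hA rfl
    exact (List.sublist_cons_self m _).trans (List.sublist_append_right T _)
  · obtain ⟨A, D, rfl⟩ := List.append_of_mem hmA
    obtain rfl : D = [] := List.eq_nil_iff_forall_not_mem.mpr fun y hy =>
      ((List.pairwise_cons.mp (List.pairwise_append.mp hA).2.1).1 y hy).not_ge
        (hmax y (by simp [hy]))
    have hL : B ++ 0 :: (A ++ [m]) = (B ++ 0 :: A) ++ m :: [] := by simp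
    rw [hL] at hnd hle
    refine ss_append_zero_cons_of_max_mem_right
      (by simpa using forall_lt_of_nodup_append_cons hnd hle) ?_
    exact ih (B ++ A).length (by rw [← hN]; simp) (hnd.sublist (List.sublist_append_left _ _))
      (List.pairwise_append.mp hA).1 rfl

theorem flatten_map_ss_perm (bs : List (List ℕ)) : ((bs.map ss).flatten).Perm bs.flatten := by
  induction bs with
  | nil => simp
  | cons b bs ih => simpa using (ss_perm b).append ih

theorem iterate_ss_perm (l : List ℕ) (k : ℕ) : (ss^[k] l).Perm l := by
  induction k with
  | zero => simp
  | succ k ih => exact (Function.iterate_succ_apply' ss k l ▸ ss_perm _).trans ih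

theorem takeWhile_ne_append_cons {T D : List ℕ} {a : ℕ} (h : a ∉ T) :
    (T ++ a :: D).takeWhile (· ≠ a) = T := by
  rw [List.takeWhile_append_of_pos fun y hy => by simpa using ne_of_mem_of_not_mem hy h]
  simp

theorem takeWhile_ss_append_zero_cons {B A : List ℕ} (hnd : (B ++ 0 :: A).Nodup)
    (hA : A.Pairwise (· < ·)) :
    (ss (B ++ 0 :: A)).takeWhile (· ≠ 0) = ((blocksOf B).map ss).flatten := by
  obtain ⟨M, -, -, hMeq⟩ := ss_append_zero_cons hnd hA
  have h0B : 0 ∉ B := fun h => (List.nodup_cons.mp (List.nodup_middle.mp hnd)).1 (by simp [h])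
  rw [hMeq, takeWhile_ne_append_cons fun h => h0B ?_]
  exact (perm_flatten_blocksOf_append_rtlMax B).symm.subset
    (List.mem_append_left _ ((flatten_map_ss_perm _).subset h))

theorem prefixAt_one {π : List ℕ} (hnd : π.Nodup) (h0 : π.getLast? = some 0) :
    prefixAt π 1 = π.dropLast := by
  have hπ := List.dropLast_append_getLast? 0 h0
  have h0π : 0 ∉ π.dropLast := fun h => by
    rw [← hπ] at hnd
    exact List.disjoint_of_nodup_append hnd h (List.mem_singleton_self 0)
  show π.takeWhile _ = _
  conv_lhs => rw [← hπ]
  exact takeWhile_ne_append_cons h0π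

theorem nodup_iterate_ss {l : List ℕ} (hnd : l.Nodup) (k : ℕ) : (ss^[k] l).Nodup :=
  (iterate_ss_perm l k).nodup_iff.mpr hnd

theorem prefixAt_add_two_of_eq {π A : List ℕ} {k : ℕ} (hnd : π.Nodup) (hA : A.Pairwise (· < ·))
    (heq : ss^[k] π = prefixAt π (k + 1) ++ 0 :: A) :
    prefixAt π (k + 2) = ((blocksAt π (k + 1)).map ss).flatten := by
  show (ss^[k + 1] π).takeWhile _ = _
  rw [Function.iterate_succ_apply', heq]
  exact takeWhile_ss_append_zero_cons (heq ▸ nodup_iterate_ss hnd k) hA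

theorem iterate_ss_eq_prefixAt_append {π : List ℕ} (hnd : π.Nodup) (h0 : π.getLast? = some 0)
    (k : ℕ) : ∃ A, A.Pairwise (· < ·) ∧ ss^[k] π = prefixAt π (k + 1) ++ 0 :: A := by
  induction k with
  | zero =>
    refine ⟨[], .nil, ?_⟩
    rw [prefixAt_one hnd h0]
    exact (List.dropLast_append_getLast? 0 h0).symm
  | succ k ih =>
    obtain ⟨A, hA, heq⟩ := ih
    obtain ⟨M, hM, -, hMeq⟩ := ss_append_zero_cons (heq ▸ nodup_iterate_ss hnd k) hA
    refine ⟨M, hM, ?_⟩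
    rw [Function.iterate_succ_apply', heq, hMeq, prefixAt_add_two_of_eq hnd hA heq]
    rfl

theorem prefixAt_add_two {π : List ℕ} (hnd : π.Nodup) (h0 : π.getLast? = some 0) (k : ℕ) :
    prefixAt π (k + 2) = ((blocksAt π (k + 1)).map ss).flatten :=
  have ⟨_, hA, heq⟩ := iterate_ss_eq_prefixAt_append hnd h0 k
  prefixAt_add_two_of_eq hnd hA heq

theorem nodup_prefixAt {π : List ℕ} (hnd : π.Nodup) (i : ℕ) : (prefixAt π i).Nodup :=
  (nodup_iterate_ss hnd _).sublist (List.takeWhile_sublist _)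

theorem mem_prefixAt_of_mem_colSeqAt {π : List ℕ} {i v : ℕ} (hv : v ∈ colSeqAt π i) :
    v ∈ prefixAt π i :=
  (rtlMax_sublist _).subset hv

theorem prefixAt_perm {π : List ℕ} (hnd : π.Nodup) (h0 : π.getLast? = some 0) (k : ℕ) :
    (prefixAt π (k + 1)).Perm (prefixAt π (k + 2) ++ colSeqAt π (k + 1)) := by
  rw [prefixAt_add_two hnd h0]
  exact (perm_flatten_blocksOf_append_rtlMax _).trans
    ((flatten_map_ss_perm _).symm.append_right _)

theorem mem_prefixAt_add_two_iff {π : List ℕ} (hnd : π.Nodup) (h0 : π.getLast? = some 0)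
    {k v : ℕ} :
    v ∈ prefixAt π (k + 2) ↔ v ∈ prefixAt π (k + 1) ∧ v ∉ colSeqAt π (k + 1) := by
  have hperm := prefixAt_perm hnd h0 k
  have hdisj := List.disjoint_of_nodup_append (hperm.nodup_iff.mp (nodup_prefixAt hnd _))
  rw [hperm.mem_iff, List.mem_append]
  exact ⟨fun h => ⟨.inl h, hdisj h⟩, fun ⟨h, hc⟩ => h.resolve_right hc⟩

theorem mem_prefixAt_of_le {π : List ℕ} (hnd : π.Nodup) (h0 : π.getLast? = some 0)
    {j k v : ℕ} (hjk : j ≤ k) (hv : v ∈ prefixAt π (k + 1)) : v ∈ prefixAt π (j + 1) := by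
  induction k, hjk using Nat.le_induction with
  | base => exact hv
  | succ k _ ih => exact ih ((mem_prefixAt_add_two_iff hnd h0).mp hv).1

theorem length_prefixAt_le {π : List ℕ} (hnd : π.Nodup) (h0 : π.getLast? = some 0) (k : ℕ) :
    (prefixAt π (k + 1)).length ≤ π.length - 1 - k := by
  induction k with
  | zero => simp [prefixAt_one hnd h0]
  | succ k ih =>
    show (prefixAt π (k + 2)).length ≤ _
    have hlen := (prefixAt_perm hnd h0 k).length_eq
    have hC : prefixAt π (k + 1) ≠ [] → colSeqAt π (k + 1) ≠ [] := rtlMax_ne_nil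
    rw [List.length_append] at hlen
    rw [← List.length_pos_iff, ← List.length_pos_iff] at hC
    omega

theorem exists_mem_colSeqAt {π : List ℕ} (hnd : π.Nodup) (h0 : π.getLast? = some 0) {v : ℕ}
    (hv : v ∈ prefixAt π 1) : ∃ k, v ∈ colSeqAt π (k + 1) := by
  have hex : ∃ k, v ∉ prefixAt π (k + 1) := ⟨π.length, fun h => by
    have := length_prefixAt_le hnd h0 π.length
    rw [List.length_eq_zero_iff.mp (by omega : (prefixAt π (π.length + 1)).length = 0)] at h
    simp at h⟩
  obtain ⟨k, hk⟩ := Nat.exists_eq_add_one_of_ne_zero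
    (fun h => (h ▸ Nat.find_spec hex) hv : Nat.find hex ≠ 0)
  have hin : v ∈ prefixAt π (k + 1) := not_not.mp (Nat.find_min hex (by omega))
  refine ⟨k, by_contra fun hc => (hk ▸ Nat.find_spec hex) ?_⟩
  exact (mem_prefixAt_add_two_iff hnd h0).mpr ⟨hin, hc⟩

theorem eq_of_mem_colSeqAt {π : List ℕ} (hnd : π.Nodup) (h0 : π.getLast? = some 0)
    {j k v : ℕ} (hj : v ∈ colSeqAt π (j + 1)) (hk : v ∈ colSeqAt π (k + 1)) : j = k := by
  wlog hjk : j < k generalizing j k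
  · rcases (not_lt.mp hjk).lt_or_eq with h | h
    exacts [(this hk hj h).symm, h.symm]
  exact (((mem_prefixAt_add_two_iff hnd h0).mp
    (mem_prefixAt_of_le hnd h0 hjk (mem_prefixAt_of_mem_colSeqAt hk))).2 hj).elim

theorem colOf_eq {π : List ℕ} (hnd : π.Nodup) (h0 : π.getLast? = some 0) {k v : ℕ}
    (hv : v ∈ colSeqAt π (k + 1)) : colOf π v = k + 1 := by
  obtain ⟨hpos, hmem⟩ : colOf π v ∈ {i | 1 ≤ i ∧ v ∈ colSeqAt π i} :=
    Nat.sInf_mem ⟨_, by omega, hv⟩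
  obtain ⟨j, hj⟩ := Nat.exists_eq_add_one_of_ne_zero (by omega : colOf π v ≠ 0)
  rw [hj] at hmem ⊢
  rw [eq_of_mem_colSeqAt hnd h0 hmem hv]

theorem eq_foldr_max_of_mem_rtlMax_ss {b : List ℕ} {v : ℕ} (hv : v ∈ rtlMax (ss b)) :
    v = b.foldr max 0 := by
  have hle : v ≤ b.foldr max 0 :=
    le_foldr_max ((ss_perm b).subset ((rtlMax_sublist _).subset hv))
  cases b with
  | nil => simp [ss_nil, rtlMax] at hv
  | cons x xs =>
    rw [ss, mem_rtlMax_append] at hv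
    rcases hv with ⟨-, h⟩ | hv
    · exact absurd (h _ (List.mem_singleton_self _)) hle.not_gt
    · simpa [rtlMax] using hv

theorem mem_map_foldr_max_of_mem_rtlMax {bs : List (List ℕ)} {v : ℕ}
    (hv : v ∈ rtlMax ((bs.map ss).flatten)) : v ∈ bs.map (·.foldr max 0) := by
  induction bs with
  | nil => simp [rtlMax] at hv
  | cons b bs ih =>
    rw [List.map_cons, List.flatten_cons, mem_rtlMax_append] at hv
    rcases hv with ⟨hv, -⟩ | hv
    · exact eq_foldr_max_of_mem_rtlMax_ss hv ▸ List.mem_cons_self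
    · exact List.mem_cons_of_mem _ (ih hv)

theorem mem_map_foldr_max_blocksAt {π : List ℕ} (hnd : π.Nodup) (h0 : π.getLast? = some 0)
    {k v : ℕ} (hv : v ∈ colSeqAt π (k + 2)) :
    v ∈ (blocksAt π (k + 1)).map (·.foldr max 0) := by
  rw [colSeqAt, prefixAt_add_two hnd h0] at hv
  exact mem_map_foldr_max_of_mem_rtlMax hv

theorem idxOf_lt_length_colSeqAt {π : List ℕ} (hnd : π.Nodup) (h0 : π.getLast? = some 0)
    {k v : ℕ} (hv : v ∈ colSeqAt π (k + 2)) :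
    ((blocksAt π (k + 1)).map (·.foldr max 0)).idxOf v < (colSeqAt π (k + 1)).length := by
  have hlt := List.idxOf_lt_length_of_mem (mem_map_foldr_max_blocksAt hnd h0 hv)
  rwa [List.length_map, blocksAt, length_blocksOf] at hlt

theorem leftOf_eq_getElem {π : List ℕ} (hnd : π.Nodup) (h0 : π.getLast? = some 0)
    {k v : ℕ} (hv : v ∈ colSeqAt π (k + 2)) :
    leftOf π v = (colSeqAt π (k + 1))[((blocksAt π (k + 1)).map (·.foldr max 0)).idxOf v]'
      (idxOf_lt_length_colSeqAt hnd h0 hv) := by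
  rw [leftOf, colOf_eq hnd h0 hv]
  exact List.getD_eq_getElem _ _ _

theorem leftOf_mem {π : List ℕ} (hnd : π.Nodup) (h0 : π.getLast? = some 0)
    {k v : ℕ} (hv : v ∈ colSeqAt π (k + 2)) : leftOf π v ∈ colSeqAt π (k + 1) :=
  leftOf_eq_getElem hnd h0 hv ▸ List.getElem_mem _

theorem leftOf_injOn {π : List ℕ} (hnd : π.Nodup) (h0 : π.getLast? = some 0) (k : ℕ) :
    Set.InjOn (leftOf π) {v | v ∈ colSeqAt π (k + 2)} := by
  intro v hv w hw h
  have hndC : (colSeqAt π (k + 1)).Nodup := (rtlMax_sublist _).nodup (nodup_prefixAt hnd _)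
  rw [leftOf_eq_getElem hnd h0 hv, leftOf_eq_getElem hnd h0 hw, hndC.getElem_inj_iff] at h
  exact (List.idxOf_inj (mem_map_foldr_max_blocksAt hnd h0 hv)).mp h

theorem rowOf_of_mem_colSeqAt_one {π : List ℕ} (hnd : π.Nodup) (h0 : π.getLast? = some 0)
    {v : ℕ} (hv : v ∈ colSeqAt π 1) : rowOf π v = (colSeqAt π 1).idxOf v + 1 := by
  simp [rowOf, colposOf, colOf_eq hnd h0 (k := 0) hv]

theorem rowOf_leftOf {π : List ℕ} (hnd : π.Nodup) (h0 : π.getLast? = some 0)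
    {k v : ℕ} (hv : v ∈ colSeqAt π (k + 2)) : rowOf π (leftOf π v) = rowOf π v := by
  rw [rowOf, rowOf, colOf_eq hnd h0 hv, colOf_eq hnd h0 (leftOf_mem hnd h0 hv)]
  simp [Function.iterate_succ_apply]

theorem rowOf_injOn {π : List ℕ} (hnd : π.Nodup) (h0 : π.getLast? = some 0) (k : ℕ) :
    Set.InjOn (rowOf π) {v | v ∈ colSeqAt π (k + 1)} := by
  intro v hv w hw h
  induction k generalizing v w with
  | zero =>
    rw [Nat.zero_add] at hv hw
    rw [rowOf_of_mem_colSeqAt_one hnd h0 hv, rowOf_of_mem_colSeqAt_one hnd h0 hw] at h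
    exact (List.idxOf_inj hv).mp (by omega)
  | succ k ih =>
    rw [← rowOf_leftOf hnd h0 hv, ← rowOf_leftOf hnd h0 hw] at h
    exact leftOf_injOn hnd h0 k hv hw (ih (leftOf_mem hnd h0 hv) (leftOf_mem hnd h0 hw) h)

theorem eq_Icc_one_card_of_add_two_mem {s : Finset ℕ} (h0 : 0 ∉ s)
    (hpred : ∀ k, k + 2 ∈ s → k + 1 ∈ s) : s = Finset.Icc 1 s.card := by
  rcases s.eq_empty_or_nonempty with rfl | hne
  · rfl
  have hs : s = Finset.Icc 1 (s.max' hne) := by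
    refine Finset.Subset.antisymm (fun k hk => Finset.mem_Icc.mpr
      ⟨Nat.one_le_iff_ne_zero.mpr (ne_of_mem_of_not_mem hk h0), s.le_max' k hk⟩) ?_
    intro c hc
    obtain ⟨hc1, hcm⟩ := Finset.mem_Icc.mp hc
    refine Nat.decreasingInduction' (fun k _ hck hk => ?_) hcm (s.max'_mem hne)
    obtain ⟨k, rfl⟩ := Nat.exists_eq_add_one_of_ne_zero (by omega : k ≠ 0)
    exact hpred k hk
  rw [hs, Nat.card_Icc, Nat.add_sub_cancel]

theorem exists_colOf_eq {π : List ℕ} (hnd : π.Nodup) (h0 : π.getLast? = some 0) {v : ℕ}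
    (hv : v ∈ prefixAt π 1) : ∃ k, colOf π v = k + 1 ∧ v ∈ colSeqAt π (k + 1) := by
  obtain ⟨k, hk⟩ := exists_mem_colSeqAt hnd h0 hv
  exact ⟨k, colOf_eq hnd h0 hk, hk⟩

theorem mem_prefixAt_one_iff {n : ℕ} {π : List ℕ} (hπ : π.Perm (List.range (n + 1)))
    (h0 : π.getLast? = some 0) {v : ℕ} : v ∈ prefixAt π 1 ↔ v ∈ Set.Icc 1 n := by
  have hnd : π.Nodup := hπ.nodup_iff.mpr List.nodup_range
  have hsplit := List.dropLast_append_getLast? 0 h0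
  have hmem : v ∈ π ↔ v ≤ n := by rw [hπ.mem_iff, List.mem_range, Nat.lt_succ_iff]
  rw [prefixAt_one hnd h0, Set.mem_Icc, Nat.one_le_iff_ne_zero, ← hmem, ← hsplit,
    List.mem_append, List.mem_singleton]
  rw [← hsplit] at hnd
  have := @List.disjoint_of_nodup_append _ _ _ hnd v
  grind

noncomputable def columnsOfRow (π : List ℕ) (n j : ℕ) : Finset ℕ :=
  ((Finset.Icc 1 n).filter (rowOf π · = j)).image (colOf π)

theorem Tmap_injOn {n : ℕ} {π : List ℕ} (hπ : π.Perm (List.range (n + 1)))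
    (h0 : π.getLast? = some 0) : Set.InjOn (Tmap π) (Set.Icc 1 n) := by
  have hnd : π.Nodup := hπ.nodup_iff.mpr List.nodup_range
  intro v hv w hw h
  obtain ⟨k, hkv, hv⟩ := exists_colOf_eq hnd h0 ((mem_prefixAt_one_iff hπ h0).mpr hv)
  obtain ⟨l, hlw, hw⟩ := exists_colOf_eq hnd h0 ((mem_prefixAt_one_iff hπ h0).mpr hw)
  obtain ⟨hcol, hrow⟩ := Prod.ext_iff.mp h
  obtain rfl : k = l := by simpa [Tmap, hkv, hlw] using hcol
  exact rowOf_injOn hnd h0 k hv hw hrow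

theorem card_columnsOfRow {n : ℕ} {π : List ℕ} (hπ : π.Perm (List.range (n + 1)))
    (h0 : π.getLast? = some 0) (j : ℕ) :
    (columnsOfRow π n j).card = ((Finset.Icc 1 n).filter (rowOf π · = j)).card := by
  refine Finset.card_image_of_injOn fun v hv w hw h => Tmap_injOn hπ h0 ?_ ?_ ?_
  all_goals simp_all [Tmap]

theorem mem_columnsOfRow_iff {n : ℕ} {π : List ℕ} (hπ : π.Perm (List.range (n + 1)))
    (h0 : π.getLast? = some 0) {c j : ℕ} :
    c ∈ columnsOfRow π n j ↔ 1 ≤ c ∧ c ≤ (columnsOfRow π n j).card := by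
  have hnd : π.Nodup := hπ.nodup_iff.mpr List.nodup_range
  have hcol : ∀ v ∈ Set.Icc 1 n, ∃ k, colOf π v = k + 1 ∧ v ∈ colSeqAt π (k + 1) :=
    fun v hv => exists_colOf_eq hnd h0 ((mem_prefixAt_one_iff hπ h0).mpr hv)
  rw [← Finset.mem_Icc, ← eq_Icc_one_card_of_add_two_mem]
  · simp only [columnsOfRow, Finset.mem_image, Finset.mem_filter, Finset.mem_Icc, not_exists,
      not_and]
    intro v ⟨hv, _⟩ h
    obtain ⟨k, hk, -⟩ := hcol v hv
    omega
  · intro k hk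
    simp only [columnsOfRow, Finset.mem_image, Finset.mem_filter, Finset.mem_Icc] at hk ⊢
    obtain ⟨v, ⟨hv, rfl⟩, hvk⟩ := hk
    obtain ⟨l, hl, hvC⟩ := hcol v hv
    obtain rfl : l = k + 1 := by omega
    refine ⟨leftOf π v, ⟨?_, rowOf_leftOf hnd h0 hvC⟩,
      colOf_eq hnd h0 (leftOf_mem hnd h0 hvC)⟩
    exact (mem_prefixAt_one_iff hπ h0).mp <| mem_prefixAt_of_le hnd h0 (Nat.zero_le k)
      (mem_prefixAt_of_mem_colSeqAt (leftOf_mem hnd h0 hvC))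

theorem one_mem_columnsOfRow_iff {n : ℕ} {π : List ℕ} (hπ : π.Perm (List.range (n + 1)))
    (h0 : π.getLast? = some 0) {j : ℕ} :
    1 ∈ columnsOfRow π n j ↔ 1 ≤ j ∧ j ≤ (colSeqAt π 1).length := by
  have hnd : π.Nodup := hπ.nodup_iff.mpr List.nodup_range
  simp only [columnsOfRow, Finset.mem_image, Finset.mem_filter, Finset.mem_Icc]
  constructor
  · rintro ⟨v, ⟨hv, rfl⟩, hcol⟩
    obtain ⟨k, hk, hvC⟩ := exists_colOf_eq hnd h0 ((mem_prefixAt_one_iff hπ h0).mpr hv)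
    obtain rfl : k = 0 := by omega
    rw [Nat.zero_add] at hvC
    rw [rowOf_of_mem_colSeqAt_one hnd h0 hvC]
    have := List.idxOf_lt_length_of_mem hvC
    omega
  · rintro ⟨hj1, hj⟩
    have hvC : (colSeqAt π 1)[j - 1] ∈ colSeqAt π 1 := List.getElem_mem _
    have hndC : (colSeqAt π 1).Nodup := (rtlMax_sublist _).nodup (nodup_prefixAt hnd _)
    refine ⟨_, ⟨(mem_prefixAt_one_iff hπ h0).mp (mem_prefixAt_of_mem_colSeqAt hvC), ?_⟩,
      colOf_eq hnd h0 (k := 0) hvC⟩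
    rw [rowOf_of_mem_colSeqAt_one hnd h0 hvC, hndC.idxOf_getElem]
    omega

theorem length_alphaOf (π : List ℕ) : (alphaOf π).length = (colSeqAt π 1).length := by
  simp [alphaOf]

theorem alphaOf_getD {n : ℕ} {π : List ℕ} (hπ : π.Perm (List.range (n + 1)))
    (h0 : π.getLast? = some 0) {j : ℕ} (hj1 : 1 ≤ j) (hj : j ≤ (colSeqAt π 1).length) :
    (alphaOf π).getD (j - 1) 0 = (columnsOfRow π n j).card := by
  rw [card_columnsOfRow hπ h0, List.getD_eq_getElem _ _ (by rw [length_alphaOf]; omega)]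
  simp [alphaOf, hπ.length_eq, Nat.add_sub_cancel' hj1]

/-- Corollary 3.17: the stack-sorting tableau `T_π : {1,…,n} → D(α_π)` is a bijection. -/
theorem stmt_12 (n : ℕ) (π : List ℕ) (hπ : π.Perm (List.range (n + 1)))
    (h0 : π.getLast? = some 0) :
    Set.BijOn (Tmap π) (Set.Icc 1 n) {p | inDiagram (alphaOf π) p} := by
  suffices himage : Tmap π '' Set.Icc 1 n = {p | inDiagram (alphaOf π) p} from
    himage ▸ (Tmap_injOn hπ h0).bijOn_image
  ext ⟨c, j⟩
  have hmem : (c, j) ∈ Tmap π '' Set.Icc 1 n ↔ c ∈ columnsOfRow π n j := by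
    simp only [columnsOfRow, Tmap, Set.mem_image, Set.mem_Icc, Prod.mk.injEq, Finset.mem_image,
      Finset.mem_filter, Finset.mem_Icc]
    exact exists_congr fun v => by tauto
  show _ ↔ inDiagram _ _
  rw [hmem, mem_columnsOfRow_iff hπ h0, inDiagram, length_alphaOf]
  constructor
  · rintro ⟨hc, hcard⟩
    obtain ⟨hj1, hj⟩ := (one_mem_columnsOfRow_iff hπ h0).mp
      ((mem_columnsOfRow_iff hπ h0).mpr ⟨le_rfl, hc.trans hcard⟩)
    exact ⟨hc, hj1, hj, (alphaOf_getD hπ h0 hj1 hj).symm ▸ hcard⟩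
  · rintro ⟨hc, hj1, hj, hcard⟩
    exact ⟨hc, alphaOf_getD hπ h0 hj1 hj ▸ hcard⟩
end

section
/- For all t ∈ ℕ and all π ∈ S_n', the permutation π is t-stack-sortable (i.e. met(π) ≤ t) if and only if w(α_π) ≤ t, where w(α) denotes the largest part of the composition α; equivalently, met(π) = w(α_π). -/
/-!
Write `π = Q ++ [0]`. One pass of stack-sorting sends `Q ++ 0 :: T`, with `T` increasing, to
`Q' ++ 0 :: T'` with `T'` increasing: `Q'` is `Q` with each block stack-sorted in place, and the
right-to-left maxima of `Q` (the column `C_{π,1}`) move past `0`. So `C_{π,i}` consists of the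
entries that leave the prefix at pass `i`, and `met π` is the number of columns. Every
right-to-left maximum of `Q'` is the maximum of a block of `Q`, hence `leftof` maps column `i + 1`
injectively into column `i`, preserving rows. Each row therefore meets each column at most once,
so `w(α_π) ≤ met π`, while following `leftof` back from an entry of the last column gives a row
with `met π` entries.
-/

theorem Nat.sInf_setOf_le_iff {p : ℕ → Prop} (hp : Monotone p) (h : ∃ n, p n) {k : ℕ} :
    sInf {n | p n} ≤ k ↔ p k :=
  ⟨fun hk => hp hk (Nat.sInf_mem h), fun hk => Nat.sInf_le hk⟩

theorem List.getD_idxOf_mem {α β : Type*} [BEq α] [LawfulBEq α] {l : List α} {l' : List β}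
    (hlen : l.length = l'.length) {a : α} (ha : a ∈ l) (d : β) :
    l'.getD (l.idxOf a) d ∈ l' := by
  rw [List.getD_eq_getElem _ _ (hlen ▸ List.idxOf_lt_length_iff.2 ha)]
  exact List.getElem_mem _

theorem List.eq_of_getD_idxOf_eq {α β : Type*} [BEq α] [LawfulBEq α] {l : List α}
    {l' : List β} (hlen : l.length = l'.length) (hnd : l'.Nodup) {a b : α} (ha : a ∈ l)
    (hb : b ∈ l) {d : β} (h : l'.getD (l.idxOf a) d = l'.getD (l.idxOf b) d) : a = b := by
  rw [List.getD_eq_getElem _ _ (hlen ▸ List.idxOf_lt_length_iff.2 ha),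
    List.getD_eq_getElem _ _ (hlen ▸ List.idxOf_lt_length_iff.2 hb), hnd.getElem_inj_iff] at h
  exact (List.idxOf_inj ha).1 h

namespace StackSorting

theorem le_foldr_max {l : List ℕ} {y : ℕ} (hy : y ∈ l) : y ≤ l.foldr max 0 :=
  List.le_max_of_le' 0 hy le_rfl

theorem foldr_max_le {l : List ℕ} {m : ℕ} (h : ∀ y ∈ l, y ≤ m) : l.foldr max 0 ≤ m :=
  List.max_le_of_forall_le l m h

theorem foldr_max_mem {l : List ℕ} (hl : l ≠ []) : l.foldr max 0 ∈ l := by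
  obtain ⟨x, xs, rfl⟩ := List.exists_cons_of_ne_nil hl
  exact foldrMaxMem x xs

@[simp] theorem ss_nil : ss [] = [] := by rw [ss]

theorem ss_append_cons_of_max {A B : List ℕ} {m : ℕ} (hA : ∀ y ∈ A, y < m)
    (hB : ∀ y ∈ B, y ≤ m) : ss (A ++ m :: B) = ss A ++ ss B ++ [m] := by
  obtain ⟨x, xs, hx⟩ := List.exists_cons_of_ne_nil (List.append_ne_nil_of_right_ne_nil A
    (List.cons_ne_nil m B))
  have hmax : (A ++ m :: B).foldr max 0 = m := by
    refine le_antisymm (foldr_max_le fun y hy => ?_) (le_foldr_max (by simp))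
    rcases List.mem_append.1 hy with hy | hy
    · exact (hA y hy).le
    · rcases List.mem_cons.1 hy with rfl | hy
      exacts [le_rfl, hB y hy]
  have hAm : ∀ y ∈ A, decide (y ≠ m) = true := fun y hy => by simpa using (hA y hy).ne
  rw [hx, ss, ← hx, hmax, List.takeWhile_append_of_pos hAm, List.dropWhile_append_of_pos hAm]
  simp

theorem exists_eq_append_max_cons {l : List ℕ} (hl : l ≠ []) :
    ∃ A B, l = A ++ l.foldr max 0 :: B ∧ ∀ y ∈ A, y < l.foldr max 0 := by
  obtain ⟨A, B, hA, hl', -⟩ := List.exists_erase_eq (foldr_max_mem hl)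
  refine ⟨A, B, hl', fun y hy => lt_of_le_of_ne (le_foldr_max ?_) (by rintro rfl; exact hA hy)⟩
  rw [hl']
  exact List.mem_append_left _ hy

theorem ss_perm (l : List ℕ) : (ss l).Perm l := by
  induction h : l.length using Nat.strong_induction_on generalizing l with
  | _ n ih =>
  rcases eq_or_ne l [] with rfl | hl
  · rw [ss_nil]
  obtain ⟨A, B, hAB, hA⟩ := exists_eq_append_max_cons hl
  have hlen : l.length = A.length + B.length + 1 := by rw [hAB]; simp; omega
  rw [hAB, ss_append_cons_of_max hA fun y hy => le_foldr_max (by rw [hAB]; simp [hy])]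
  refine ((ih _ (by omega) A rfl).append (ih _ (by omega) B rfl)).append_right _ |>.trans ?_
  simpa using (List.perm_append_singleton _ B).append_left A

theorem ss_iterate_perm (l : List ℕ) (k : ℕ) : (ss^[k] l).Perm l := by
  induction k with
  | zero => rfl
  | succ k ih => rw [Function.iterate_succ_apply']; exact (ss_perm _).trans ih

theorem rtlMax_sublist (l : List ℕ) : (rtlMax l).Sublist l := by
  induction l with
  | nil => rw [rtlMax]
  | cons x xs ih =>
    rw [rtlMax]
    split
    · exact ih.cons_cons x
    · exact ih.cons x

theorem rtlMax_append (A B : List ℕ) :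
    rtlMax (A ++ B) = (rtlMax A).filter (fun x => ∀ y ∈ B, y < x) ++ rtlMax B := by
  induction A with
  | nil => rw [rtlMax]; rfl
  | cons x xs ih =>
    rw [List.cons_append, rtlMax, rtlMax, ih]
    simp only [List.mem_append, or_imp, forall_and]
    split_ifs <;> simp_all

theorem rtlMax_append_cons_of_max {b q : List ℕ} {m : ℕ} (hb : ∀ y ∈ b, y < m)
    (hq : ∀ y ∈ q, y < m) : rtlMax (b ++ m :: q) = m :: rtlMax q := by
  rw [rtlMax_append, List.filter_eq_nil_iff.2, rtlMax, if_pos hq, List.nil_append]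
  intro x hx h
  exact lt_asymm (of_decide_eq_true h m List.mem_cons_self) (hb x ((rtlMax_sublist b).subset hx))

theorem rtlMax_ne_nil {l : List ℕ} (hl : l ≠ []) : rtlMax l ≠ [] := by
  induction l with
  | nil => exact absurd rfl hl
  | cons x xs ih =>
    rw [rtlMax]
    split
    · exact List.cons_ne_nil _ _
    · rcases eq_or_ne xs [] with rfl | hxs
      · simp_all
      · exact ih hxs

theorem rtlMax_pairwise (l : List ℕ) : (rtlMax l).Pairwise (· > ·) := by
  induction l with
  | nil => rw [rtlMax]; exact List.Pairwise.nil
  | cons x xs ih =>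
    rw [rtlMax]
    split
    · exact ih.cons fun y hy => ‹∀ y ∈ xs, y < x› y ((rtlMax_sublist xs).subset hy)
    · exact ih

theorem rtlMax_nodup (l : List ℕ) : (rtlMax l).Nodup :=
  (rtlMax_pairwise l).imp ne_of_gt

theorem exists_ss_eq_append_max {b : List ℕ} (hb : b ≠ []) :
    ∃ u, ss b = u ++ [b.foldr max 0] := by
  obtain ⟨x, xs, rfl⟩ := List.exists_cons_of_ne_nil hb
  rw [ss]
  exact ⟨_, rfl⟩

theorem rtlMax_ss {b : List ℕ} (hb : b ≠ []) : rtlMax (ss b) = [b.foldr max 0] := by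
  obtain ⟨u, hu⟩ := exists_ss_eq_append_max hb
  rw [hu, rtlMax_append, List.filter_eq_nil_iff.2, rtlMax, rtlMax, if_pos (by simp)]
  · rfl
  intro y hy h
  have hyb : y ∈ b :=
    (ss_perm b).subset (hu ▸ List.mem_append_left _ ((rtlMax_sublist u).subset hy))
  exact (of_decide_eq_true h _ List.mem_cons_self).not_ge (le_foldr_max hyb)

theorem blocksOf_append_cons_of_max {b q : List ℕ} {m : ℕ} (hb : ∀ y ∈ b, y < m)
    (hq : ∀ y ∈ q, y < m) : blocksOf (b ++ m :: q) = b :: blocksOf q := by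
  induction b with
  | nil => rw [List.nil_append, blocksOf, if_pos hq]
  | cons x bs ih =>
    have hx : ¬∀ y ∈ bs ++ m :: q, y < x := fun h =>
      lt_asymm (h m (by simp)) (hb x List.mem_cons_self)
    rw [List.cons_append, blocksOf, if_neg hx, ih fun y hy => hb y (List.mem_cons_of_mem _ hy)]

theorem blocksOf_eq_nil {l : List ℕ} : blocksOf l = [] ↔ l = [] := by
  cases l with
  | nil => rw [blocksOf]; simp
  | cons x xs =>
    rw [blocksOf]
    split
    · simp
    · split <;> simp

theorem length_blocksOf (l : List ℕ) : (blocksOf l).length = (rtlMax l).length := by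
  induction l with
  | nil => rw [blocksOf, rtlMax]; rfl
  | cons x xs ih =>
    rw [blocksOf, rtlMax]
    split
    · simp [ih]
    · split <;> simp_all [blocksOf_eq_nil]

theorem flatten_blocksOf_append_rtlMax_perm (l : List ℕ) :
    ((blocksOf l).flatten ++ rtlMax l).Perm l := by
  induction l with
  | nil => rw [blocksOf, rtlMax]; rfl
  | cons x xs ih =>
    rw [blocksOf, rtlMax]
    split
    · simpa using List.perm_middle.trans (ih.cons x)
    · split <;> simp_all [blocksOf_eq_nil]

/-- The part of `s(Q ++ 0 :: T)` before `0`: every block of `Q` is stack-sorted in place. -/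
def sortBlocks (Q : List ℕ) : List ℕ := ((blocksOf Q).map ss).flatten

theorem sortBlocks_nil : sortBlocks [] = [] := by
  rw [sortBlocks, blocksOf]
  rfl

theorem sortBlocks_append_cons_of_max {b q : List ℕ} {m : ℕ} (hb : ∀ y ∈ b, y < m)
    (hq : ∀ y ∈ q, y < m) : sortBlocks (b ++ m :: q) = ss b ++ sortBlocks q := by
  simp [sortBlocks, blocksOf_append_cons_of_max hb hq]

theorem sortBlocks_append_rtlMax_perm (Q : List ℕ) : (sortBlocks Q ++ rtlMax Q).Perm Q := by
  refine List.Perm.trans ?_ (flatten_blocksOf_append_rtlMax_perm Q)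
  refine List.Perm.append_right _ ?_
  simpa [sortBlocks, List.flatMap_def] using
    List.Perm.flatMap_left (blocksOf Q) (f := ss) (g := id) fun b _ => ss_perm b

theorem mem_of_mem_sortBlocks {L : List ℕ} {v : ℕ} (hv : v ∈ sortBlocks L) : v ∈ L :=
  (sortBlocks_append_rtlMax_perm L).subset (List.mem_append_left _ hv)

theorem mem_sortBlocks_iff {L : List ℕ} (hL : L.Nodup) {v : ℕ} (hv : v ∈ L) :
    v ∈ sortBlocks L ↔ v ∉ rtlMax L := by
  have hperm := sortBlocks_append_rtlMax_perm L
  have hnd := hperm.nodup_iff.2 hL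
  refine ⟨fun h h' => List.disjoint_of_nodup_append hnd h h', fun h => ?_⟩
  simpa [h] using hperm.mem_iff.2 hv

theorem mem_rtlMax_iff_mem_and_not_mem_sortBlocks {L : List ℕ} (hL : L.Nodup) {v : ℕ} :
    v ∈ rtlMax L ↔ v ∈ L ∧ v ∉ sortBlocks L := by
  constructor
  · intro h
    have hv := (rtlMax_sublist L).subset h
    exact ⟨hv, fun h' => (mem_sortBlocks_iff hL hv).1 h' h⟩
  · rintro ⟨hv, h⟩
    by_contra h'
    exact h ((mem_sortBlocks_iff hL hv).2 h')

theorem length_sortBlocks_le (L : List ℕ) : (sortBlocks L).length ≤ L.length - 1 := by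
  have hlen := (sortBlocks_append_rtlMax_perm L).length_eq
  rcases eq_or_ne L [] with rfl | hL
  · simp [sortBlocks_nil]
  · have := List.length_pos_of_ne_nil (rtlMax_ne_nil hL)
    simp at hlen
    omega

theorem mem_map_foldr_max_of_mem_rtlMax_flatten_map_ss {v : ℕ} :
    ∀ {bs : List (List ℕ)}, v ∈ rtlMax ((bs.map ss).flatten) → v ∈ bs.map (·.foldr max 0)
  | [], h => by simp [rtlMax] at h
  | b :: bs, h => by
    rw [List.map_cons, List.flatten_cons, rtlMax_append] at h
    rcases List.mem_append.1 h with h | h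
    · rcases eq_or_ne b [] with rfl | hb
      · simp [rtlMax] at h
      · rw [rtlMax_ss hb] at h
        simp_all
    · exact List.mem_cons_of_mem _ (mem_map_foldr_max_of_mem_rtlMax_flatten_map_ss h)

def OnePassForm (Q T : List ℕ) : Prop :=
  ∃ T', ss (Q ++ 0 :: T) = sortBlocks Q ++ 0 :: T' ∧ T'.Pairwise (· < ·) ∧
    T'.Perm (rtlMax Q ++ T)

theorem onePassForm_nil_nil : OnePassForm [] [] := by
  refine ⟨[], ?_, List.Pairwise.nil, by rw [rtlMax]; rfl⟩
  simpa [sortBlocks_nil] using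
    ss_append_cons_of_max (A := []) (B := []) (m := 0) (by simp) (by simp)

theorem OnePassForm.append_singleton {Q T : List ℕ} {t : ℕ} (h : OnePassForm Q T)
    (ht : ∀ y ∈ Q ++ 0 :: T, y < t) : OnePassForm Q (T ++ [t]) := by
  obtain ⟨T', hss, hsort, hperm⟩ := h
  have hT' : ∀ y ∈ T', y < t := fun y hy => by
    rcases List.mem_append.1 (hperm.subset hy) with hy | hy
    · exact ht y (List.mem_append_left _ ((rtlMax_sublist Q).subset hy))
    · exact ht y (by simp [hy])
  refine ⟨T' ++ [t], ?_, ?_, ?_⟩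
  · have := ss_append_cons_of_max (B := []) ht (by simp)
    simp only [List.append_assoc, List.cons_append] at this
    simp [this, hss]
  · simpa [List.pairwise_append] using ⟨hsort, hT'⟩
  · simpa using hperm.append_right [t]

theorem OnePassForm.append_cons_of_max {b Q T : List ℕ} {m : ℕ} (h : OnePassForm Q T)
    (hb : ∀ y ∈ b, y < m) (hQ : ∀ y ∈ Q, y < m) (hT : ∀ y ∈ T, y < m) :
    OnePassForm (b ++ m :: Q) T := by
  obtain ⟨T', hss, hsort, hperm⟩ := h
  have hT' : ∀ y ∈ T', y < m := fun y hy => by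
    rcases List.mem_append.1 (hperm.subset hy) with hy | hy
    exacts [hQ y ((rtlMax_sublist Q).subset hy), hT y hy]
  refine ⟨T' ++ [m], ?_, ?_, ?_⟩
  · have hle : ∀ y ∈ Q ++ 0 :: T, y ≤ m := by
      simp only [List.mem_append, List.mem_cons]
      rintro y (hy | rfl | hy)
      exacts [(hQ y hy).le, Nat.zero_le m, (hT y hy).le]
    rw [List.append_assoc, List.cons_append, ss_append_cons_of_max hb hle, hss,
      sortBlocks_append_cons_of_max hb hQ]
    simp
  · simpa [List.pairwise_append] using ⟨hsort, hT'⟩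
  · rw [rtlMax_append_cons_of_max hb hQ]
    exact (hperm.append_right [m]).trans
      (by simpa using List.perm_append_singleton m (rtlMax Q ++ T))

theorem onePassForm_of_forall_lt_foldr_max {Q T : List ℕ} (hQ : Q ≠ [])
    (hnd : (Q ++ 0 :: T).Nodup) (hT : ∀ y ∈ T, y < Q.foldr max 0)
    (ih : ∀ Q', Q'.length < Q.length → (Q' ++ 0 :: T).Nodup → OnePassForm Q' T) :
    OnePassForm Q T := by
  obtain ⟨b, Q', hbQ, hb⟩ := exists_eq_append_max_cons hQ
  set m := Q.foldr max 0
  have hsub : Q'.Sublist Q := by rw [hbQ]; simp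
  have hQ' : ∀ y ∈ Q', y < m := fun y hy => by
    refine lt_of_le_of_ne (le_foldr_max (hsub.subset hy)) ?_
    rintro rfl
    rw [hbQ, List.append_assoc, List.nodup_append, List.cons_append, List.nodup_cons] at hnd
    exact hnd.2.1.1 (List.mem_append_left _ hy)
  have hlen : Q'.length < Q.length := by rw [hbQ]; simp; omega
  have := (ih Q' hlen ((hsub.append_right _).nodup hnd)).append_cons_of_max hb hQ' hT
  rwa [← hbQ] at this

theorem onePassForm_of_nodup (Q T : List ℕ) (hnd : (Q ++ 0 :: T).Nodup)
    (hT : T.Pairwise (· < ·)) : OnePassForm Q T := by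
  induction h : Q.length + T.length using Nat.strong_induction_on generalizing Q T with
  | _ n ih =>
  -- The maximum of `Q ++ 0 :: T` is either the last entry of `T`, which `ss` leaves in place,
  -- or the maximum of `Q`, which splits off the first block of `Q`.
  rcases T.eq_nil_or_concat' with rfl | ⟨T₀, t, rfl⟩
  · rcases eq_or_ne Q [] with rfl | hQ
    · exact onePassForm_nil_nil
    · exact onePassForm_of_forall_lt_foldr_max hQ hnd (by simp) fun Q' hQ' hnd' =>
        ih _ (by simp at h ⊢; omega) Q' [] hnd' hT rfl
  have hlast : ∀ y ∈ T₀, y < t := fun y hy => (List.pairwise_append.1 hT).2.2 y hy t (by simp)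
  have ht0 : t ≠ 0 := by rintro rfl; simp [List.nodup_append] at hnd
  have hQt : ∀ q ∈ Q, q ≠ t := by
    rintro q hq rfl
    exact List.disjoint_of_nodup_append hnd hq (by simp)
  by_cases hlt : ∀ q ∈ Q, q < t
  · refine (ih _ ?_ Q T₀ ?_ (hT.sublist (by simp)) rfl).append_singleton ?_
    · simp at h ⊢; omega
    · exact (List.Sublist.append_left (by simp) Q).nodup hnd
    · simp only [List.mem_append, List.mem_cons]
      rintro y (hy | rfl | hy)
      exacts [hlt y hy, Nat.pos_of_ne_zero ht0, hlast y hy]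
  · push Not at hlt
    obtain ⟨q, hq, htq⟩ := hlt
    have htm : t < Q.foldr max 0 :=
      lt_of_le_of_ne (htq.trans (le_foldr_max hq))
        (hQt _ (foldr_max_mem (List.ne_nil_of_mem hq))).symm
    refine onePassForm_of_forall_lt_foldr_max (List.ne_nil_of_mem hq) hnd ?_ fun Q' hQ' hnd' =>
      ih _ (by simp at h ⊢; omega) Q' _ hnd' hT rfl
    simp only [List.mem_append, List.mem_singleton]
    rintro y (hy | rfl)
    exacts [(hlast y hy).trans htm, htm]

theorem iterate_sortBlocks_length_self (Q : List ℕ) : sortBlocks^[Q.length] Q = [] := by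
  have : ∀ k, (sortBlocks^[k] Q).length ≤ Q.length - k := by
    intro k
    induction k with
    | zero => simp
    | succ k ih =>
      rw [Function.iterate_succ_apply']
      have := length_sortBlocks_le (sortBlocks^[k] Q)
      omega
  simpa using this Q.length

theorem iterate_sortBlocks_nodup {Q : List ℕ} (hQ : Q.Nodup) (k : ℕ) :
    (sortBlocks^[k] Q).Nodup := by
  induction k with
  | zero => exact hQ
  | succ k ih =>
    rw [Function.iterate_succ_apply']
    exact ((sortBlocks_append_rtlMax_perm _).nodup_iff.2 ih).sublist (by simp)

theorem iterate_sortBlocks_succ_subset (Q : List ℕ) (k : ℕ) :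
    sortBlocks^[k + 1] Q ⊆ sortBlocks^[k] Q := fun _ hv => by
  rw [Function.iterate_succ_apply'] at hv
  exact mem_of_mem_sortBlocks hv

theorem iterate_sortBlocks_subset (Q : List ℕ) (k : ℕ) : sortBlocks^[k] Q ⊆ Q := by
  induction k with
  | zero => exact List.Subset.refl Q
  | succ k ih => exact List.Subset.trans (iterate_sortBlocks_succ_subset Q k) ih

theorem ss_iterate_append_zero {Q : List ℕ} (hnd : (Q ++ [0]).Nodup) (k : ℕ) :
    ∃ T, ss^[k] (Q ++ [0]) = sortBlocks^[k] Q ++ 0 :: T ∧ T.Pairwise (· < ·) := by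
  induction k with
  | zero => exact ⟨[], rfl, List.Pairwise.nil⟩
  | succ k ih =>
    obtain ⟨T, hT, hsort⟩ := ih
    have hnd' : (sortBlocks^[k] Q ++ 0 :: T).Nodup := hT ▸ (ss_iterate_perm _ k).nodup_iff.2 hnd
    obtain ⟨T', hss, hsort', -⟩ := onePassForm_of_nodup _ _ hnd' hsort
    refine ⟨T', ?_, hsort'⟩
    rw [Function.iterate_succ_apply', Function.iterate_succ_apply', hT, hss]

section AppendZero

variable {Q : List ℕ}

theorem prefixAt_append_zero (hnd : (Q ++ [0]).Nodup) (i : ℕ) :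
    prefixAt (Q ++ [0]) i = sortBlocks^[i - 1] Q := by
  obtain ⟨T, hT, -⟩ := ss_iterate_append_zero hnd (i - 1)
  have h0 : 0 ∉ sortBlocks^[i - 1] Q := by
    have := hT ▸ (ss_iterate_perm _ (i - 1)).nodup_iff.2 hnd
    exact fun h => List.disjoint_of_nodup_append this h List.mem_cons_self
  rw [prefixAt, hT,
    List.takeWhile_append_of_pos (by simpa using fun a ha (h : a = 0) => h0 (h ▸ ha))]
  simp

theorem colSeqAt_append_zero (hnd : (Q ++ [0]).Nodup) (i : ℕ) :
    colSeqAt (Q ++ [0]) i = rtlMax (sortBlocks^[i - 1] Q) := by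
  rw [colSeqAt, prefixAt_append_zero hnd]

theorem blocksAt_append_zero (hnd : (Q ++ [0]).Nodup) (i : ℕ) :
    blocksAt (Q ++ [0]) i = blocksOf (sortBlocks^[i - 1] Q) := by
  rw [blocksAt, prefixAt_append_zero hnd]

theorem pairwise_ss_iterate_iff (hnd : (Q ++ [0]).Nodup) (k : ℕ) :
    (ss^[k] (Q ++ [0])).Pairwise (· < ·) ↔ sortBlocks^[k] Q = [] := by
  obtain ⟨T, hT, hsort⟩ := ss_iterate_append_zero hnd k
  have hnd' := hT ▸ (ss_iterate_perm _ k).nodup_iff.2 hnd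
  rw [hT]
  generalize sortBlocks^[k] Q = P at hnd' ⊢
  rcases P with _ | ⟨p, P⟩
  · rw [List.nil_append, List.nodup_cons] at hnd'
    simp only [List.nil_append, List.pairwise_cons, iff_true]
    exact ⟨fun y hy => Nat.pos_of_ne_zero fun h => hnd'.1 (h ▸ hy), hsort⟩
  · simp only [List.cons_append, List.pairwise_cons, reduceCtorEq, iff_false]
    exact fun h => Nat.not_lt_zero p (h.1 0 (by simp))

theorem met_append_zero_le_iff (hnd : (Q ++ [0]).Nodup) {k : ℕ} :
    met (Q ++ [0]) ≤ k ↔ sortBlocks^[k] Q = [] := by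
  have hset : {k | (ss^[k] (Q ++ [0])).Pairwise (· < ·)} = {k | sortBlocks^[k] Q = []} :=
    Set.ext fun k => pairwise_ss_iterate_iff hnd k
  rw [met, hset]
  refine Nat.sInf_setOf_le_iff (p := fun k => sortBlocks^[k] Q = [])
    (monotone_nat_of_le_succ fun k (h : _ = []) => ?_)
    ⟨Q.length, iterate_sortBlocks_length_self Q⟩
  rw [Function.iterate_succ_apply', h, sortBlocks_nil]

theorem lt_colOf_iff (hnd : (Q ++ [0]).Nodup) {v : ℕ} (hv : v ∈ Q) {k : ℕ} :
    k < colOf (Q ++ [0]) v ↔ v ∈ sortBlocks^[k] Q := by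
  have hQ : Q.Nodup := hnd.sublist (by simp)
  set c := sInf {k | v ∉ sortBlocks^[k] Q}
  have hc : ∀ k, c ≤ k ↔ v ∉ sortBlocks^[k] Q := fun k =>
    Nat.sInf_setOf_le_iff (monotone_nat_of_le_succ fun k h h' =>
      h (iterate_sortBlocks_succ_subset Q k h'))
      ⟨Q.length, by simp [iterate_sortBlocks_length_self]⟩
  have hcol : colOf (Q ++ [0]) v = c := by
    have hc0 : ¬c ≤ 0 := by rw [hc]; simpa using hv
    rw [colOf, ← csInf_singleton c]
    congr 1
    ext i
    simp only [Set.mem_ofPred_eq, Set.mem_singleton_iff, colSeqAt_append_zero hnd,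
      mem_rtlMax_iff_mem_and_not_mem_sortBlocks (iterate_sortBlocks_nodup hQ _)]
    rcases i with _ | i
    · simp only [Nat.le_zero]; omega
    · rw [Nat.add_sub_cancel, ← Function.iterate_succ_apply' sortBlocks, ← hc]
      have hci := hc i
      constructor
      · rintro ⟨-, hvi, hc'⟩
        have : ¬c ≤ i := fun h => hci.1 h hvi
        omega
      · intro hic
        exact ⟨by omega, by_contra fun h => absurd (hci.2 h) (by omega), by omega⟩
  rw [hcol, ← not_le, hc, not_not]

theorem mem_rtlMax_iterate_iff (hnd : (Q ++ [0]).Nodup) {v : ℕ} (hv : v ∈ Q) {k : ℕ} :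
    v ∈ rtlMax (sortBlocks^[k] Q) ↔ colOf (Q ++ [0]) v = k + 1 := by
  rw [mem_rtlMax_iff_mem_and_not_mem_sortBlocks
      (iterate_sortBlocks_nodup (hnd.sublist (by simp)) k),
    ← Function.iterate_succ_apply' sortBlocks, ← lt_colOf_iff hnd hv, ← lt_colOf_iff hnd hv]
  omega

theorem one_le_colOf (hnd : (Q ++ [0]).Nodup) {v : ℕ} (hv : v ∈ Q) : 1 ≤ colOf (Q ++ [0]) v :=
  (lt_colOf_iff hnd hv (k := 0)).2 hv

theorem colOf_le_met (hnd : (Q ++ [0]).Nodup) {v : ℕ} (hv : v ∈ Q) :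
    colOf (Q ++ [0]) v ≤ met (Q ++ [0]) := by
  by_contra h
  have := (lt_colOf_iff hnd hv).1 (not_le.1 h)
  rw [(met_append_zero_le_iff hnd).1 le_rfl] at this
  exact List.not_mem_nil this

theorem exists_colOf_eq_met (hnd : (Q ++ [0]).Nodup) (hmet : 0 < met (Q ++ [0])) :
    ∃ v ∈ Q, colOf (Q ++ [0]) v = met (Q ++ [0]) := by
  have hne : sortBlocks^[met (Q ++ [0]) - 1] Q ≠ [] := fun h =>
    absurd ((met_append_zero_le_iff hnd).2 h) (by omega)
  obtain ⟨v, hv⟩ := List.exists_mem_of_ne_nil _ (rtlMax_ne_nil hne)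
  have hvQ := iterate_sortBlocks_subset Q _ ((rtlMax_sublist _).subset hv)
  exact ⟨v, hvQ, by rw [(mem_rtlMax_iterate_iff hnd hvQ).1 hv]; omega⟩

theorem leftOf_eq (hnd : (Q ++ [0]).Nodup) {v k : ℕ} (hcol : colOf (Q ++ [0]) v = k + 2) :
    leftOf (Q ++ [0]) v = (rtlMax (sortBlocks^[k] Q)).getD
      (((blocksOf (sortBlocks^[k] Q)).map (·.foldr max 0)).idxOf v) 0 := by
  rw [leftOf, hcol, colSeqAt_append_zero hnd, blocksAt_append_zero hnd]
  rfl

theorem mem_map_foldr_max_blocksOf_of_colOf_eq (hnd : (Q ++ [0]).Nodup) {v k : ℕ} (hv : v ∈ Q)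
    (hcol : colOf (Q ++ [0]) v = k + 2) :
    v ∈ (blocksOf (sortBlocks^[k] Q)).map (·.foldr max 0) := by
  refine mem_map_foldr_max_of_mem_rtlMax_flatten_map_ss ?_
  rw [← sortBlocks, ← Function.iterate_succ_apply' sortBlocks, mem_rtlMax_iterate_iff hnd hv]
  exact hcol

theorem leftOf_mem_and_colOf (hnd : (Q ++ [0]).Nodup) {v k : ℕ} (hv : v ∈ Q)
    (hcol : colOf (Q ++ [0]) v = k + 2) :
    leftOf (Q ++ [0]) v ∈ Q ∧ colOf (Q ++ [0]) (leftOf (Q ++ [0]) v) = k + 1 := by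
  have hmem : leftOf (Q ++ [0]) v ∈ rtlMax (sortBlocks^[k] Q) := by
    rw [leftOf_eq hnd hcol]
    exact List.getD_idxOf_mem (by simp [length_blocksOf])
      (mem_map_foldr_max_blocksOf_of_colOf_eq hnd hv hcol) 0
  have hQ := iterate_sortBlocks_subset Q k ((rtlMax_sublist _).subset hmem)
  exact ⟨hQ, (mem_rtlMax_iterate_iff hnd hQ).1 hmem⟩

theorem eq_of_leftOf_eq (hnd : (Q ++ [0]).Nodup) {u v k : ℕ} (hu : u ∈ Q) (hv : v ∈ Q)
    (hcu : colOf (Q ++ [0]) u = k + 2) (hcv : colOf (Q ++ [0]) v = k + 2)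
    (h : leftOf (Q ++ [0]) u = leftOf (Q ++ [0]) v) : u = v := by
  rw [leftOf_eq hnd hcu, leftOf_eq hnd hcv] at h
  exact List.eq_of_getD_idxOf_eq (by simp [length_blocksOf]) (rtlMax_nodup _)
    (mem_map_foldr_max_blocksOf_of_colOf_eq hnd hu hcu)
    (mem_map_foldr_max_blocksOf_of_colOf_eq hnd hv hcv) h

theorem iterate_leftOf_mem_and_colOf (hnd : (Q ++ [0]).Nodup) {v : ℕ} (hv : v ∈ Q) {s : ℕ}
    (hs : s < colOf (Q ++ [0]) v) :
    (leftOf (Q ++ [0]))^[s] v ∈ Q ∧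
      colOf (Q ++ [0]) ((leftOf (Q ++ [0]))^[s] v) = colOf (Q ++ [0]) v - s := by
  induction s with
  | zero => exact ⟨hv, rfl⟩
  | succ s ih =>
    obtain ⟨hmem, hcol⟩ := ih (by omega)
    rw [Function.iterate_succ_apply']
    obtain ⟨hmem', hcol'⟩ := leftOf_mem_and_colOf hnd hmem (k := colOf (Q ++ [0]) v - s - 2)
      (by omega)
    exact ⟨hmem', by omega⟩

theorem eq_of_iterate_leftOf_eq (hnd : (Q ++ [0]).Nodup) {u v : ℕ} (hu : u ∈ Q) (hv : v ∈ Q)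
    (hcol : colOf (Q ++ [0]) u = colOf (Q ++ [0]) v) {s : ℕ} (hs : s < colOf (Q ++ [0]) v)
    (h : (leftOf (Q ++ [0]))^[s] u = (leftOf (Q ++ [0]))^[s] v) : u = v := by
  induction s with
  | zero => exact h
  | succ s ih =>
    obtain ⟨hu', hcu⟩ := iterate_leftOf_mem_and_colOf hnd hu (s := s) (by omega)
    obtain ⟨hv', hcv⟩ := iterate_leftOf_mem_and_colOf hnd hv (s := s) (by omega)
    rw [Function.iterate_succ_apply', Function.iterate_succ_apply'] at h
    exact ih (by omega) (eq_of_leftOf_eq hnd hu' hv' (k := colOf (Q ++ [0]) v - s - 2)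
      (by omega) (by omega) h)

theorem iterate_leftOf_mem_rtlMax (hnd : (Q ++ [0]).Nodup) {v : ℕ} (hv : v ∈ Q) :
    (leftOf (Q ++ [0]))^[colOf (Q ++ [0]) v - 1] v ∈ rtlMax Q := by
  have := one_le_colOf hnd hv
  obtain ⟨hw, hcw⟩ := iterate_leftOf_mem_and_colOf hnd hv (s := colOf (Q ++ [0]) v - 1)
    (by omega)
  exact (mem_rtlMax_iterate_iff hnd hw (k := 0)).2 (by omega)

theorem rowOf_eq_idxOf (hnd : (Q ++ [0]).Nodup) {v : ℕ} (hv : v ∈ Q) :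
    rowOf (Q ++ [0]) v =
      (rtlMax Q).idxOf ((leftOf (Q ++ [0]))^[colOf (Q ++ [0]) v - 1] v) + 1 := by
  have hroot := iterate_leftOf_mem_rtlMax hnd hv
  have hQ := (rtlMax_sublist Q).subset hroot
  rw [rowOf, colposOf, (mem_rtlMax_iterate_iff hnd hQ (k := 0)).1 hroot,
    colSeqAt_append_zero hnd]
  rfl

theorem rowOf_le_length_rtlMax (hnd : (Q ++ [0]).Nodup) {v : ℕ} (hv : v ∈ Q) :
    rowOf (Q ++ [0]) v ≤ (rtlMax Q).length := by
  have := List.idxOf_lt_length_iff.2 (iterate_leftOf_mem_rtlMax hnd hv)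
  rw [rowOf_eq_idxOf hnd hv]
  omega

theorem rowOf_iterate_leftOf (hnd : (Q ++ [0]).Nodup) {v : ℕ} (hv : v ∈ Q) {s : ℕ}
    (hs : s < colOf (Q ++ [0]) v) :
    rowOf (Q ++ [0]) ((leftOf (Q ++ [0]))^[s] v) = rowOf (Q ++ [0]) v := by
  obtain ⟨hw, hcw⟩ := iterate_leftOf_mem_and_colOf hnd hv hs
  rw [rowOf_eq_idxOf hnd hw, rowOf_eq_idxOf hnd hv, hcw, ← Function.iterate_add_apply]
  congr 3
  omega

theorem eq_of_rowOf_eq_of_colOf_eq (hnd : (Q ++ [0]).Nodup) {u v : ℕ} (hu : u ∈ Q)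
    (hv : v ∈ Q) (hcol : colOf (Q ++ [0]) u = colOf (Q ++ [0]) v)
    (hrow : rowOf (Q ++ [0]) u = rowOf (Q ++ [0]) v) : u = v := by
  rw [rowOf_eq_idxOf hnd hu, rowOf_eq_idxOf hnd hv, hcol, Nat.add_right_cancel_iff,
    List.idxOf_inj (hcol ▸ iterate_leftOf_mem_rtlMax hnd hu)] at hrow
  exact eq_of_iterate_leftOf_eq hnd hu hv hcol (by have := one_le_colOf hnd hv; omega) hrow

theorem card_filter_rowOf_le_met (hnd : (Q ++ [0]).Nodup) (j : ℕ) :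
    (Q.toFinset.filter fun v => rowOf (Q ++ [0]) v = j).card ≤ met (Q ++ [0]) := by
  calc (Q.toFinset.filter fun v => rowOf (Q ++ [0]) v = j).card
      ≤ (Finset.Icc 1 (met (Q ++ [0]))).card := by
        refine Finset.card_le_card_of_injOn (colOf (Q ++ [0])) (fun v hv => ?_)
          fun u hu v hv hcol => ?_
        · simp only [Finset.coe_filter, List.mem_toFinset, Set.mem_ofPred_eq] at hv
          simpa using ⟨one_le_colOf hnd hv.1, colOf_le_met hnd hv.1⟩
        · simp only [Finset.coe_filter, List.mem_toFinset, Set.mem_ofPred_eq] at hu hv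
          exact eq_of_rowOf_eq_of_colOf_eq hnd hu.1 hv.1 hcol (hu.2.trans hv.2.symm)
    _ = met (Q ++ [0]) := by simp

theorem exists_met_le_card_filter_rowOf (hnd : (Q ++ [0]).Nodup) (hmet : 0 < met (Q ++ [0])) :
    ∃ j, 1 ≤ j ∧ j ≤ (rtlMax Q).length ∧
      met (Q ++ [0]) ≤ (Q.toFinset.filter fun v => rowOf (Q ++ [0]) v = j).card := by
  obtain ⟨v, hv, hcol⟩ := exists_colOf_eq_met hnd hmet
  refine ⟨rowOf (Q ++ [0]) v, by rw [rowOf_eq_idxOf hnd hv]; omega,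
    rowOf_le_length_rtlMax hnd hv, ?_⟩
  calc met (Q ++ [0]) = (Finset.range (met (Q ++ [0]))).card := (Finset.card_range _).symm
    _ ≤ _ := by
      refine Finset.card_le_card_of_injOn (fun s => (leftOf (Q ++ [0]))^[s] v)
        (fun s hs => ?_) fun s hs s' hs' h => ?_
      · simp only [Finset.coe_range, Set.mem_Iio] at hs
        simp only [Finset.coe_filter, List.mem_toFinset, Set.mem_ofPred_eq]
        exact ⟨(iterate_leftOf_mem_and_colOf hnd hv (hcol ▸ hs)).1,
          rowOf_iterate_leftOf hnd hv (hcol ▸ hs)⟩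
      · simp only [Finset.coe_range, Set.mem_Iio] at hs hs'
        have hc := congrArg (colOf (Q ++ [0])) h
        simp only [(iterate_leftOf_mem_and_colOf hnd hv (hcol ▸ hs)).2,
          (iterate_leftOf_mem_and_colOf hnd hv (hcol ▸ hs')).2] at hc
        omega

theorem foldr_max_alphaOf (hnd : (Q ++ [0]).Nodup) (hQ : Finset.Icc 1 Q.length = Q.toFinset) :
    (alphaOf (Q ++ [0])).foldr max 0 = met (Q ++ [0]) := by
  have hα : alphaOf (Q ++ [0]) = (List.range' 1 (rtlMax Q).length).map
      fun j => (Q.toFinset.filter fun v => rowOf (Q ++ [0]) v = j).card := by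
    rw [alphaOf, colSeqAt_append_zero hnd]
    simp [hQ]
  rw [hα]
  refine le_antisymm (foldr_max_le ?_) ?_
  · simp only [List.mem_map]
    rintro _ ⟨j, -, rfl⟩
    exact card_filter_rowOf_le_met hnd j
  · rcases Nat.eq_zero_or_pos (met (Q ++ [0])) with h | h
    · simp [h]
    obtain ⟨j, hj1, hjL, hcard⟩ := exists_met_le_card_filter_rowOf hnd h
    exact hcard.trans
      (le_foldr_max (List.mem_map.2 ⟨j, List.mem_range'_1.2 ⟨hj1, by omega⟩, rfl⟩))

end AppendZero

theorem Icc_one_length_eq_toFinset {Q : List ℕ} {n : ℕ}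
    (h : (Q ++ [0]).Perm (List.range (n + 1))) :
    Finset.Icc 1 Q.length = Q.toFinset := by
  have hnd : (Q ++ [0]).Nodup := h.nodup_iff.2 List.nodup_range
  have hlen : Q.length = n := by simpa using h.length_eq
  have h0 : 0 ∉ Q := fun h0 => List.disjoint_of_nodup_append hnd h0 (List.mem_singleton_self 0)
  have hmem : ∀ v, v ∈ Q ∨ v = 0 ↔ v < n + 1 := by simpa using fun v => h.mem_iff (a := v)
  ext v
  simp only [Finset.mem_Icc, List.mem_toFinset]
  constructor
  · rintro ⟨hv1, hvn⟩
    exact ((hmem v).2 (by omega)).resolve_right (by omega)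
  · intro hv
    have := (hmem v).1 (Or.inl hv)
    exact ⟨Nat.pos_of_ne_zero (ne_of_mem_of_not_mem hv h0), by omega⟩

end StackSorting

open StackSorting in
/-- `π ∈ Sₙ'` is `t`-stack-sortable iff `w(α_π) ≤ t`; equivalently `met(π) = w(α_π)`. -/
theorem stmt_19 (n t : ℕ) (π : List ℕ) (hπ : π.Perm (List.range (n + 1)))
    (h0 : π.getLast? = some 0) :
    (met π ≤ t ↔ (alphaOf π).foldr max 0 ≤ t) ∧ met π = (alphaOf π).foldr max 0 := by
  obtain ⟨Q, rfl⟩ := List.getLast?_eq_some_iff.1 h0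
  have hmet := foldr_max_alphaOf (hπ.nodup_iff.2 List.nodup_range) (Icc_one_length_eq_toFinset hπ)
  exact ⟨by rw [hmet], hmet.symm⟩
end
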